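/- Let n ≥ 2, κ > 1, P ∈ ℝⁿ with P ≠ 0, and |P| < b < κ|P|. Then: (c) for every x ∈ Γ(P,b), (b − |P|)/κ ≤ |P − h(x,P,b)x| ≤ (b − |P|)/(κ − 1); (d) √((κ|P| − b)/|P|) · (κ² + κ − 2)/(2κ√(2κ(κ² − 1))) ≤ I(P,b) − 1/κ ≤ √((κ|P| − b)/|P|) · 2√(κ − 1)/κ. -/

import Mathlib

open scoped RealInnerProductSpace

/-- The discriminant `Δ(t) = (κ²t − b)² − (κ² − 1)(κ²|P|² − b²)` for the Cartesian oval in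
the case `κ > 1`. -/
noncomputable def ovalDelta' (κ b normP t : ℝ) : ℝ :=
  (κ ^ 2 * t - b) ^ 2 - (κ ^ 2 - 1) * (κ ^ 2 * normP ^ 2 - b ^ 2)

/-- The polar radius `h(x,P,b) = ρ₋(x)` of the refracting piece of the Cartesian oval
(case `κ > 1`). -/
noncomputable def ovalH' {n : ℕ} (κ b : ℝ) (P x : EuclideanSpace ℝ (Fin n)) : ℝ :=
  ((κ ^ 2 * ⟪x, P⟫ - b) - Real.sqrt (ovalDelta' κ b ‖P‖ ⟪x, P⟫)) / (κ ^ 2 - 1)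

/-- `I(P,b) = (b + √((κ² − 1)(κ²|P|² − b²)))/(κ²|P|)`. -/
noncomputable def ovalI (κ b normP : ℝ) : ℝ :=
  (b + Real.sqrt ((κ ^ 2 - 1) * (κ ^ 2 * normP ^ 2 - b ^ 2))) / (κ ^ 2 * normP)

/-- `Γ(P,b) = {x ∈ S^{n−1} : x·P ≥ I(P,b)|P|}`, the set of directions of the refracting
piece of the oval. -/
def ovalGamma {n : ℕ} (κ b : ℝ) (P : EuclideanSpace ℝ (Fin n)) :
    Set (EuclideanSpace ℝ (Fin n)) :=
  {x | ‖x‖ = 1 ∧ ovalI κ b ‖P‖ * ‖P‖ ≤ ⟪x, P⟫}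


/-!
For `x ∈ Γ(P,b)` the radius `h = h(x,P,b)` is the smaller root of the quadratic equation
`κ²|P − h x|² = (b − h)²` in `h`, and `0 ≤ h ≤ |P|`. So `κ|P − h x| = b − h`, which gives the
lower bound in (c); the triangle inequality `|P| − h ≤ |P − h x|` gives the upper one.

For (d) write `b = |P|(κ − r²)` with `r = √((κ|P| − b)/|P|)`, so that `0 ≤ r² ≤ κ − 1`. By
homogeneity `I(P,b) − 1/κ = r (√((κ² − 1)(2κ − r²)) − r)/κ²`, and the factor
`√((κ² − 1)(2κ − r²)) − r` lies between `κ√(κ − 1)` and `2κ√(κ − 1)`.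
-/

section
variable {κ b p t : ℝ}

theorem ovalI_mul (hp : p ≠ 0) :
    ovalI κ b p * p = (b + √((κ ^ 2 - 1) * (κ ^ 2 * p ^ 2 - b ^ 2))) / κ ^ 2 := by
  rw [ovalI, ← div_div, div_mul_cancel₀ _ hp]

theorem ovalDelta'_nonneg (h : √((κ ^ 2 - 1) * (κ ^ 2 * p ^ 2 - b ^ 2)) ≤ κ ^ 2 * t - b) :
    0 ≤ ovalDelta' κ b p t := by
  rw [ovalDelta', sub_nonneg]
  exact (Real.sqrt_le_iff.mp h).2

theorem sqrt_ovalDelta'_le (hW : 0 ≤ (κ ^ 2 - 1) * (κ ^ 2 * p ^ 2 - b ^ 2))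
    (ht : 0 ≤ κ ^ 2 * t - b) : √(ovalDelta' κ b p t) ≤ κ ^ 2 * t - b :=
  (Real.sqrt_le_left ht).mpr (by rw [ovalDelta']; linarith)

end

section
variable {n : ℕ} {κ b : ℝ} {P x : EuclideanSpace ℝ (Fin n)}

theorem sqrt_le_of_mem_ovalGamma (hκ : κ ≠ 0) (hP : P ≠ 0) (hx : x ∈ ovalGamma κ b P) :
    √((κ ^ 2 - 1) * (κ ^ 2 * ‖P‖ ^ 2 - b ^ 2)) ≤ κ ^ 2 * ⟪x, P⟫ - b := by
  have h := hx.2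
  rw [ovalI_mul (norm_ne_zero_iff.mpr hP), div_le_iff₀ (by positivity)] at h
  linarith

theorem sub_one_mul_ovalH' (hκ : κ ^ 2 - 1 ≠ 0) :
    (κ ^ 2 - 1) * ovalH' κ b P x = κ ^ 2 * ⟪x, P⟫ - b - √(ovalDelta' κ b ‖P‖ ⟪x, P⟫) := by
  rw [ovalH', mul_div_cancel₀ _ hκ]

theorem norm_sub_smul_sq_of_norm_eq_one (hx : ‖x‖ = 1) (h : ℝ) :
    ‖P - h • x‖ ^ 2 = ‖P‖ ^ 2 - 2 * ⟪x, P⟫ * h + h ^ 2 := by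
  rw [norm_sub_sq_real, real_inner_smul_right, norm_smul, hx, real_inner_comm, Real.norm_eq_abs,
    mul_one, sq_abs]
  ring

theorem ovalH'_mem_Icc (hκ : 1 < κ) (hP : P ≠ 0) (hb1 : ‖P‖ ≤ b) (hb2 : b ≤ κ * ‖P‖)
    (hx : x ∈ ovalGamma κ b P) : ovalH' κ b P x ∈ Set.Icc 0 ‖P‖ := by
  have hκ2 : 0 < κ ^ 2 - 1 := by nlinarith
  have hS := sqrt_le_of_mem_ovalGamma (by positivity) hP hx
  have hW : 0 ≤ (κ ^ 2 - 1) * (κ ^ 2 * ‖P‖ ^ 2 - b ^ 2) :=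
    mul_nonneg hκ2.le (by nlinarith [norm_nonneg P])
  have hΔ := sqrt_ovalDelta'_le hW ((Real.sqrt_nonneg _).trans hS)
  have ht : ⟪x, P⟫ ≤ ‖P‖ := by simpa [hx.1] using real_inner_le_norm x P
  have h := sub_one_mul_ovalH' (x := x) (P := P) (b := b) hκ2.ne'
  constructor
  · nlinarith
  · nlinarith [Real.sqrt_nonneg (ovalDelta' κ b ‖P‖ ⟪x, P⟫)]

theorem mul_norm_sub_ovalH'_smul (hκ : 1 < κ) (hP : P ≠ 0) (hb1 : ‖P‖ ≤ b) (hb2 : b ≤ κ * ‖P‖)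
    (hx : x ∈ ovalGamma κ b P) : κ * ‖P - ovalH' κ b P x • x‖ = b - ovalH' κ b P x := by
  set h := ovalH' κ b P x
  have hκ2 : κ ^ 2 - 1 ≠ 0 := by nlinarith
  have hΔ := Real.sq_sqrt (ovalDelta'_nonneg (sqrt_le_of_mem_ovalGamma (by positivity) hP hx))
  have hroot : κ ^ 2 * ‖P - h • x‖ ^ 2 = (b - h) ^ 2 := by
    rw [norm_sub_smul_sq_of_norm_eq_one hx.1]
    rw [show √(ovalDelta' κ b ‖P‖ ⟪x, P⟫) = κ ^ 2 * ⟪x, P⟫ - b - (κ ^ 2 - 1) * h by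
      linarith [sub_one_mul_ovalH' (x := x) (P := P) (b := b) hκ2], ovalDelta'] at hΔ
    apply mul_left_cancel₀ hκ2
    linear_combination hΔ
  rw [← Real.sqrt_sq (by positivity : 0 ≤ κ * ‖P - h • x‖), mul_pow, hroot,
    Real.sqrt_sq (by linarith [(ovalH'_mem_Icc hκ hP hb1 hb2 hx).2])]

theorem norm_sub_ovalH'_smul_bounds (hκ : 1 < κ) (hP : P ≠ 0) (hb1 : ‖P‖ ≤ b)
    (hb2 : b ≤ κ * ‖P‖) (hx : x ∈ ovalGamma κ b P) :
    (b - ‖P‖) / κ ≤ ‖P - ovalH' κ b P x • x‖ ∧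
      ‖P - ovalH' κ b P x • x‖ ≤ (b - ‖P‖) / (κ - 1) := by
  obtain ⟨h0, hle⟩ := ovalH'_mem_Icc hκ hP hb1 hb2 hx
  have hN := mul_norm_sub_ovalH'_smul hκ hP hb1 hb2 hx
  have htri : ‖P‖ - ovalH' κ b P x ≤ ‖P - ovalH' κ b P x • x‖ := by
    simpa [norm_smul, hx.1, abs_of_nonneg h0] using norm_sub_norm_le P (ovalH' κ b P x • x)
  constructor
  · rw [div_le_iff₀' (by linarith)]
    linarith
  · rw [le_div_iff₀ (by linarith)]
    linarith

end

section
variable {κ b p r : ℝ}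

theorem ovalI_sub_one_div_eq (hκ : κ ≠ 0) (hp : 0 < p) (hr : 0 ≤ r) (hb : b = p * (κ - r ^ 2)) :
    ovalI κ b p - 1 / κ = r * (√((κ ^ 2 - 1) * (2 * κ - r ^ 2)) - r) / κ ^ 2 := by
  have hW : (κ ^ 2 - 1) * (κ ^ 2 * p ^ 2 - b ^ 2) =
      (p * r) ^ 2 * ((κ ^ 2 - 1) * (2 * κ - r ^ 2)) := by
    rw [hb]; ring
  rw [ovalI, hW, Real.sqrt_mul (sq_nonneg _), Real.sqrt_sq (by positivity), hb]
  field_simp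
  ring

theorem oval_sqrt_sub_bounds (hκ : 1 < κ) (hr : 0 ≤ r) (hr2 : r ^ 2 ≤ κ - 1) :
    κ * √(κ - 1) ≤ √((κ ^ 2 - 1) * (2 * κ - r ^ 2)) - r ∧
      √((κ ^ 2 - 1) * (2 * κ - r ^ 2)) - r ≤ 2 * κ * √(κ - 1) := by
  have hm := Real.sq_sqrt (by linarith : (0 : ℝ) ≤ κ - 1)
  have hr_le : r ≤ √(κ - 1) := Real.le_sqrt_of_sq_le hr2
  constructor
  · have : (κ + 1) * √(κ - 1) ≤ √((κ ^ 2 - 1) * (2 * κ - r ^ 2)) :=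
      Real.le_sqrt_of_sq_le (by
        rw [mul_pow, hm]
        nlinarith [mul_nonneg (by nlinarith : (0 : ℝ) ≤ κ ^ 2 - 1) (sub_nonneg.mpr hr2)])
    linarith
  · have : √((κ ^ 2 - 1) * (2 * κ - r ^ 2)) ≤ 2 * κ * √(κ - 1) :=
      (Real.sqrt_le_left (by positivity)).mpr (by
        rw [mul_pow, hm]
        nlinarith [mul_nonneg (by linarith : (0 : ℝ) ≤ κ - 1)
          (by positivity : 0 ≤ 2 * κ * (κ - 1) + (κ + 1) * r ^ 2)])
    linarith

theorem oval_lower_const_le (hκ : 1 < κ) :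
    (κ ^ 2 + κ - 2) / (2 * κ * √(2 * κ * (κ ^ 2 - 1))) ≤ √(κ - 1) / κ := by
  have hm := Real.sq_sqrt (by linarith : (0 : ℝ) ≤ κ - 1)
  have hm0 : 0 < √(κ - 1) := Real.sqrt_pos.mpr (by linarith)
  have hd : √(2 * κ * (κ ^ 2 - 1)) = √(κ - 1) * √(2 * κ * (κ + 1)) := by
    rw [← Real.sqrt_mul (by linarith)]; ring_nf
  have hd' : κ + 2 ≤ 2 * √(2 * κ * (κ + 1)) := by
    have := Real.le_sqrt_of_sq_le (show ((κ + 2) / 2) ^ 2 ≤ 2 * κ * (κ + 1) by nlinarith)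
    linarith
  rw [hd, div_le_div_iff₀ (by positivity) (by positivity)]
  have hk : κ ^ 2 + κ - 2 = √(κ - 1) ^ 2 * (κ + 2) := by rw [hm]; ring
  rw [hk]
  have := mul_le_mul_of_nonneg_left hd' (by positivity : 0 ≤ √(κ - 1) ^ 2 * κ)
  nlinarith

theorem ovalI_sub_one_div_bounds (hκ : 1 < κ) (hp : 0 < p) (hb1 : p ≤ b) (hb2 : b ≤ κ * p) :
    √((κ * p - b) / p) * ((κ ^ 2 + κ - 2) / (2 * κ * √(2 * κ * (κ ^ 2 - 1))))
      ≤ ovalI κ b p - 1 / κ ∧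
    ovalI κ b p - 1 / κ ≤ √((κ * p - b) / p) * (2 * √(κ - 1) / κ) := by
  set r := √((κ * p - b) / p)
  have hr : 0 ≤ r := Real.sqrt_nonneg _
  have hr2 : r ^ 2 = (κ * p - b) / p := Real.sq_sqrt (div_nonneg (by linarith) hp.le)
  have hb : b = p * (κ - r ^ 2) := by rw [hr2]; field_simp; ring
  have hr2' : r ^ 2 ≤ κ - 1 := by rw [hr2, div_le_iff₀ hp]; linarith
  have hκ0 : 0 < κ := by linarith
  obtain ⟨hlo, hhi⟩ := oval_sqrt_sub_bounds hκ hr hr2'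
  rw [ovalI_sub_one_div_eq hκ0.ne' hp hr hb]
  constructor
  · calc r * ((κ ^ 2 + κ - 2) / (2 * κ * √(2 * κ * (κ ^ 2 - 1))))
        ≤ r * (√(κ - 1) / κ) := mul_le_mul_of_nonneg_left (oval_lower_const_le hκ) hr
      _ = r * (κ * √(κ - 1)) / κ ^ 2 := by field_simp
      _ ≤ _ := by gcongr
  · calc r * (√((κ ^ 2 - 1) * (2 * κ - r ^ 2)) - r) / κ ^ 2
        ≤ r * (2 * κ * √(κ - 1)) / κ ^ 2 := by gcongr
      _ = _ := by field_simp
end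

theorem stmt13_general {n : ℕ} (κ : ℝ) (hκ : 1 < κ)
    (P : EuclideanSpace ℝ (Fin n)) (hP : P ≠ 0) (b : ℝ)
    (hb1 : ‖P‖ < b) (hb2 : b < κ * ‖P‖) :
    -- (c)
    (∀ x ∈ ovalGamma κ b P,
      (b - ‖P‖) / κ ≤ ‖P - ovalH' κ b P x • x‖ ∧
      ‖P - ovalH' κ b P x • x‖ ≤ (b - ‖P‖) / (κ - 1)) ∧
    -- (d)
    Real.sqrt ((κ * ‖P‖ - b) / ‖P‖) * ((κ ^ 2 + κ - 2) / (2 * κ * Real.sqrt (2 * κ * (κ ^ 2 - 1))))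
      ≤ ovalI κ b ‖P‖ - 1 / κ ∧
    ovalI κ b ‖P‖ - 1 / κ ≤
      Real.sqrt ((κ * ‖P‖ - b) / ‖P‖) * (2 * Real.sqrt (κ - 1) / κ) :=
  ⟨fun _ hx => norm_sub_ovalH'_smul_bounds hκ hP hb1.le hb2.le hx,
    ovalI_sub_one_div_bounds hκ (norm_pos_iff.mpr hP) hb1.le hb2.le⟩

/-- Lemma 4.3 (c), (d): bounds on `|P − h(x,P,b)x|` on `Γ(P,b)` and on `I(P,b) − 1/κ`
for `κ > 1`. -/
theorem stmt13 {n : ℕ} (hn : 2 ≤ n) (κ : ℝ) (hκ : 1 < κ)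
    (P : EuclideanSpace ℝ (Fin n)) (hP : P ≠ 0) (b : ℝ)
    (hb1 : ‖P‖ < b) (hb2 : b < κ * ‖P‖) :
    -- (c)
    (∀ x ∈ ovalGamma κ b P,
      (b - ‖P‖) / κ ≤ ‖P - ovalH' κ b P x • x‖ ∧
      ‖P - ovalH' κ b P x • x‖ ≤ (b - ‖P‖) / (κ - 1)) ∧
    -- (d)
    Real.sqrt ((κ * ‖P‖ - b) / ‖P‖) * ((κ ^ 2 + κ - 2) / (2 * κ * Real.sqrt (2 * κ * (κ ^ 2 - 1))))
      ≤ ovalI κ b ‖P‖ - 1 / κ ∧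
    ovalI κ b ‖P‖ - 1 / κ ≤
      Real.sqrt ((κ * ‖P‖ - b) / ‖P‖) * (2 * Real.sqrt (κ - 1) / κ) :=
  stmt13_general κ hκ P hP b hb1 hb2
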